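/- Let A be a commutative ring graded by the natural numbers such that the product of any m+1 homogeneous elements of positive degree is zero. Then in the tensor product algebra A ⊗ A, the product of any 2m+1 homogeneous elementary tensors u_i ⊗ v_i, each of total positive degree, is zero. -/

import Mathlib

open TensorProduct

/-!
Multiplying out, `∏ (uᵢ ⊗ vᵢ) = (∏ uᵢ) ⊗ (∏ vᵢ)`. Among the `2m + 1` indices, either at least
`m + 1` have `deg uᵢ > 0`, so that `∏ uᵢ = 0`, or at least `m + 1` have `deg uᵢ = 0`, and then
`deg vᵢ > 0` for all of them, so that `∏ vᵢ = 0`.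
-/

theorem Algebra.TensorProduct.prod_tmul {R A B ι : Type*} [CommSemiring R] [CommSemiring A]
    [Algebra R A] [CommSemiring B] [Algebra R B] (s : Finset ι) (f : ι → A) (g : ι → B) :
    ∏ i ∈ s, f i ⊗ₜ[R] g i = (∏ i ∈ s, f i) ⊗ₜ[R] (∏ i ∈ s, g i) := by
  induction s using Finset.cons_induction with
  | empty => simp [Algebra.TensorProduct.one_def]
  | cons a s _ ih => simp only [Finset.prod_cons, ih, Algebra.TensorProduct.tmul_mul_tmul]

theorem Fintype.prod_eq_zero_of_le_card {M ι : Type*} [CommMonoidWithZero M] [Fintype ι]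
    {P : M → Prop} {m : ℕ} (hP : ∀ f : Fin (m + 1) → M, (∀ i, P (f i)) → ∏ i, f i = 0)
    (w : ι → M) {T : Finset ι} (hT : m + 1 ≤ T.card) (hTP : ∀ i ∈ T, P (w i)) :
    ∏ i, w i = 0 := by
  obtain ⟨S, hST, hS⟩ := Finset.exists_subset_card_eq hT
  let e : Fin (m + 1) ≃ S := (Fintype.equivFinOfCardEq (by simpa using hS)).symm
  have hprodS : ∏ i ∈ S, w i = 0 := by
    rw [← Finset.prod_coe_sort, ← e.prod_comp]
    exact hP _ fun j => hTP _ (hST (e j).2)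
  exact zero_dvd_iff.mp (hprodS ▸ Finset.prod_dvd_prod_of_subset S _ w (Finset.subset_univ S))

theorem stmt11_general (m : ℕ) {A : Type*} [CommRing A] (𝒜 : ℕ → Submodule ℤ A)
    (hzero : ∀ f : Fin (m + 1) → A, (∀ i, ∃ d, 0 < d ∧ f i ∈ 𝒜 d) → ∏ i, f i = 0)
    (u v : Fin (2 * m + 1) → A) (du dv : Fin (2 * m + 1) → ℕ)
    (hu : ∀ i, u i ∈ 𝒜 (du i)) (hv : ∀ i, v i ∈ 𝒜 (dv i))
    (hpos : ∀ i, 0 < du i + dv i) :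
    (∏ i, (u i ⊗ₜ[ℤ] v i) : A ⊗[ℤ] A) = 0 := by
  let P : A → Prop := fun a => ∃ d, 0 < d ∧ a ∈ 𝒜 d
  rw [Algebra.TensorProduct.prod_tmul]
  set S := Finset.univ.filter fun i => 0 < du i
  have hcard : S.card + Sᶜ.card = 2 * m + 1 := by simp [Finset.card_add_card_compl]
  rcases le_or_gt (m + 1) S.card with hS | hS
  · have hprod : ∏ i, u i = 0 := Fintype.prod_eq_zero_of_le_card (P := P) hzero u hS
      fun i hi => ⟨du i, (Finset.mem_filter.mp hi).2, hu i⟩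
    rw [hprod, zero_tmul]
  · have hprod : ∏ i, v i = 0 := Fintype.prod_eq_zero_of_le_card (P := P) hzero v (T := Sᶜ)
      (by omega) fun i hi => by
        have hdu : du i = 0 := by simpa [S] using hi
        exact ⟨dv i, by have := hpos i; omega, hv i⟩
    rw [hprod, tmul_zero]

theorem stmt11 (m : ℕ) {A : Type*} [CommRing A] (𝒜 : ℕ → Submodule ℤ A) [GradedRing 𝒜]
    (hzero : ∀ f : Fin (m + 1) → A, (∀ i, ∃ d, 0 < d ∧ f i ∈ 𝒜 d) → ∏ i, f i = 0)
    (u v : Fin (2 * m + 1) → A) (du dv : Fin (2 * m + 1) → ℕ)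
    (hu : ∀ i, u i ∈ 𝒜 (du i)) (hv : ∀ i, v i ∈ 𝒜 (dv i))
    (hpos : ∀ i, 0 < du i + dv i) :
    (∏ i, (u i ⊗ₜ[ℤ] v i) : A ⊗[ℤ] A) = 0 :=
  stmt11_general m 𝒜 hzero u v du dv hu hv hpos
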